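/- arXiv:2412.09850 — 4 statements merged into one kernel-verified Lean document; each statement's English description precedes it below -/
import Mathlib

section
/- Let α : (0,∞) → (0,∞) be differentiable with ∫_0^∞ α(u) du = ∞, and let γ ∈ (0,1). Define Λ_γ(t) = ∫_t^∞ exp(−γ ∫_t^r α(u) du) dr and assume Λ_γ(0) < ∞. If e^{−γ∫_0^t α(u)du}/α(t) → 0 and (1/α)'(t) → 0 as t → ∞, then lim_{t→∞} α(t) Λ_γ(t) = 1/γ. -/
open MeasureTheory Filter

theorem stmt_2 (α : ℝ → ℝ) (γ : ℝ) (hγ : γ ∈ Set.Ioo (0:ℝ) 1)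
    (hpos : ∀ t > (0:ℝ), 0 < α t)
    (hdiff : DifferentiableOn ℝ α (Set.Ioi 0))
    (hdiv : Tendsto (fun t => ∫ u in (0:ℝ)..t, α u) atTop atTop)
    (Λγ : ℝ → ℝ)
    (hΛ : ∀ t : ℝ, Λγ t = ∫ r in Set.Ioi t, Real.exp (-γ * ∫ u in t..r, α u))
    (hfin : ∀ t ≥ (0:ℝ),
      IntegrableOn (fun r => Real.exp (-γ * ∫ u in t..r, α u)) (Set.Ioi t))
    (h1 : Tendsto (fun t => Real.exp (-γ * ∫ u in (0:ℝ)..t, α u) / α t) atTop (nhds 0))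
    (h2 : Tendsto (deriv fun t => 1 / α t) atTop (nhds 0)) :
    Tendsto (fun t => α t * Λγ t) atTop (nhds (1 / γ)) := by
  obtain ⟨hγ0, hγ1⟩ := hγ
  have hαcont : ContinuousOn α (Set.Ioi 0) := hdiff.continuousOn
  -- interval integrability of α on positive intervals
  have hintab : ∀ a b : ℝ, 0 < a → 0 < b → IntervalIntegrable α volume a b := by
    intro a b ha hb
    apply (hαcont.mono ?_).intervalIntegrable
    intro x hx
    rcases le_total a b with h | h
    · rw [Set.uIcc_of_le h] at hx; exact lt_of_lt_of_le ha hx.1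
    · rw [Set.uIcc_of_ge h] at hx; exact lt_of_lt_of_le hb hx.1
  -- α is interval integrable on [0,1]
  obtain ⟨t0, ht0i, ht01⟩ : ∃ t0 : ℝ, (1:ℝ) ≤ (∫ u in (0:ℝ)..t0, α u) ∧ 1 ≤ t0 :=
    ((hdiv.eventually_ge_atTop 1).and (eventually_ge_atTop 1)).exists
  have hint0t0 : IntervalIntegrable α volume 0 t0 := by
    by_contra h
    rw [intervalIntegral.integral_undef h] at ht0i; linarith
  have hint01 : IntervalIntegrable α volume 0 1 := by
    apply hint0t0.mono_set
    rw [Set.uIcc_of_le (by norm_num : (0:ℝ) ≤ 1), Set.uIcc_of_le (by linarith : (0:ℝ) ≤ t0)]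
    exact Set.Icc_subset_Icc le_rfl ht01
  set B : ℝ → ℝ := fun t => ∫ u in (1:ℝ)..t, α u with hBdef
  have hB : ∀ t > (0:ℝ), HasDerivAt B (α t) t := by
    intro t ht
    exact intervalIntegral.integral_hasDerivAt_right (hintab 1 t one_pos ht)
      (hαcont.stronglyMeasurableAtFilter isOpen_Ioi t ht)
      (hαcont.continuousAt (Ioi_mem_nhds ht))
  have hBcont : ContinuousOn B (Set.Ioi 0) := fun t ht =>
    ((hB t ht).continuousAt).continuousWithinAt
  have E1 : ∀ t : ℝ, 1 ≤ t → ∀ r ∈ Set.Ioi t, (∫ u in t..r, α u) = B r - B t := by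
    intro t ht r hr
    have h1t : IntervalIntegrable α volume 1 t := hintab 1 t one_pos (by linarith)
    have htr : IntervalIntegrable α volume t r :=
      hintab t r (by linarith) (by simp only [Set.mem_Ioi] at hr; linarith)
    have := intervalIntegral.integral_add_adjacent_intervals h1t htr
    simp only [hBdef]
    linarith [this]
  have E2 : ∀ t : ℝ, 1 ≤ t → (∫ u in (0:ℝ)..t, α u) = (∫ u in (0:ℝ)..1, α u) + B t := by
    intro t ht
    exact (intervalIntegral.integral_add_adjacent_intervals hint01
      (hintab 1 t one_pos (by linarith))).symm
  -- the auxiliary functions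
  set E : ℝ → ℝ := fun r => Real.exp (-γ * B r) with hEdef
  set f : ℝ → ℝ := fun t => ∫ r in Set.Ioi t, E r with hfdef
  set g : ℝ → ℝ := fun t => E t * (1 / α t) with hgdef
  have hEpos : ∀ r, 0 < E r := fun r => Real.exp_pos _
  have hEcont : ContinuousOn E (Set.Ioi 0) :=
    Real.continuous_exp.comp_continuousOn ((continuousOn_const).mul hBcont)
  have hEint : IntegrableOn E (Set.Ioi 1) := by
    rw [hEdef, hBdef]
    exact hfin 1 (by norm_num)
  -- splitting of f
  have hsplit : ∀ t : ℝ, 1 ≤ t → f t = (∫ r in Set.Ioi 1, E r) - ∫ r in (1:ℝ)..t, E r := by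
    intro t ht
    have hdisj : Disjoint (Set.Ioc 1 t) (Set.Ioi t) := by
      simp [Set.disjoint_left]
    have hunion : Set.Ioc 1 t ∪ Set.Ioi t = Set.Ioi 1 := Set.Ioc_union_Ioi_eq_Ioi ht
    have h1 : IntegrableOn E (Set.Ioc 1 t) := hEint.mono_set (by rw [← hunion]; exact Set.subset_union_left)
    have h2 : IntegrableOn E (Set.Ioi t) := hEint.mono_set (by rw [← hunion]; exact Set.subset_union_right)
    have := MeasureTheory.setIntegral_union hdisj measurableSet_Ioi h1 h2
    rw [hunion] at this
    rw [intervalIntegral.integral_of_le ht]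
    simp only [hfdef]
    linarith [this]
  -- f tends to 0
  have hftend : Tendsto f atTop (nhds 0) := by
    have h' : Tendsto (fun t => (∫ r in Set.Ioi 1, E r) - ∫ r in (1:ℝ)..t, E r) atTop
        (nhds ((∫ r in Set.Ioi 1, E r) - ∫ r in Set.Ioi 1, E r)) :=
      tendsto_const_nhds.sub
        (MeasureTheory.intervalIntegral_tendsto_integral_Ioi 1 hEint tendsto_id)
    rw [sub_self] at h'
    exact h'.congr' (by filter_upwards [eventually_ge_atTop (1:ℝ)] with t ht; exact (hsplit t ht).symm)
  -- g tends to 0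
  have hgtend : Tendsto g atTop (nhds 0) := by
    have h' := h1.const_mul (Real.exp (γ * ∫ u in (0:ℝ)..1, α u))
    rw [mul_zero] at h'
    apply h'.congr'
    filter_upwards [eventually_ge_atTop (1:ℝ)] with t ht
    show _ = E t * (1 / α t)
    rw [E2 t ht]
    simp only [hEdef]
    rw [← mul_div_assoc, ← Real.exp_add, mul_one_div]
    congr 2
    ring
  -- derivative of f
  have hf' : ∀ t : ℝ, 1 < t → HasDerivAt f (-(E t)) t := by
    intro t ht
    have key : HasDerivAt (fun s => (∫ r in Set.Ioi 1, E r) - ∫ r in (1:ℝ)..s, E r) (-(E t)) t := by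
      apply HasDerivAt.const_sub
      exact intervalIntegral.integral_hasDerivAt_right
        ((hEcont.mono (by
          intro x hx
          rw [Set.uIcc_of_le (le_of_lt ht)] at hx
          exact lt_of_lt_of_le one_pos hx.1)).intervalIntegrable)
        (hEcont.stronglyMeasurableAtFilter isOpen_Ioi t (by simp; linarith))
        (hEcont.continuousAt (Ioi_mem_nhds (by linarith)))
    apply key.congr_of_eventuallyEq
    filter_upwards [Ioi_mem_nhds ht] with s hs
    exact hsplit s (le_of_lt hs)
  -- derivative of g
  set q' : ℝ → ℝ := deriv (fun s => 1 / α s) with hq'def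
  have hg' : ∀ t : ℝ, 1 < t → HasDerivAt g (E t * (q' t - γ)) t := by
    intro t ht
    have ht0 : (0:ℝ) < t := by linarith
    have hαt : α t ≠ 0 := ne_of_gt (hpos t ht0)
    have hq : DifferentiableAt ℝ (fun s => 1 / α s) t :=
      (differentiableAt_const 1).div (hdiff.differentiableAt (Ioi_mem_nhds ht0)) hαt
    have hqd : HasDerivAt (fun s => 1 / α s) (q' t) t := hq.hasDerivAt
    have hEd : HasDerivAt (fun s => Real.exp (-γ * B s)) (Real.exp (-γ * B t) * (-γ * α t)) t :=
      (((hB t ht0).const_mul (-γ)).exp)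
    have := hEd.mul hqd
    apply this.congr_deriv
    rw [hEdef]
    field_simp
    ring
  -- eventual nonvanishing of g'
  have hq'lt : ∀ᶠ t in atTop, q' t < γ := h2.eventually (gt_mem_nhds hγ0)
  have hg'ne : ∀ᶠ t in atTop, E t * (q' t - γ) ≠ 0 := by
    filter_upwards [hq'lt] with t h
    exact mul_ne_zero (ne_of_gt (hEpos t)) (by linarith)
  -- ratio of derivatives
  have hratio : Tendsto (fun t => (-(E t)) / (E t * (q' t - γ))) atTop (nhds (1 / γ)) := by
    have heq : ∀ t, (-(E t)) / (E t * (q' t - γ)) = 1 / (γ - q' t) := by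
      intro t
      rw [neg_div, div_mul_cancel_left₀ (ne_of_gt (hEpos t)),
        show γ - q' t = -(q' t - γ) by ring, one_div, inv_neg]
    have h' : Tendsto (fun t => 1 / (γ - q' t)) atTop (nhds (1 / (γ - 0))) :=
      tendsto_const_nhds.div (tendsto_const_nhds.sub h2) (by simpa using ne_of_gt hγ0)
    rw [sub_zero] at h'
    exact h'.congr (fun t => (heq t).symm)
  -- L'Hôpital
  have hmain : Tendsto (fun t => f t / g t) atTop (nhds (1 / γ)) := by
    apply HasDerivAt.lhopital_zero_atTop
      (f' := fun t => -(E t)) (g' := fun t => E t * (q' t - γ))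
      ?_ ?_ hg'ne hftend hgtend hratio
    · filter_upwards [eventually_gt_atTop (1:ℝ)] with t ht; exact hf' t ht
    · filter_upwards [eventually_gt_atTop (1:ℝ)] with t ht; exact hg' t ht
  -- conclude
  apply hmain.congr'
  filter_upwards [eventually_ge_atTop (1:ℝ)] with t ht
  have ht0 : (0:ℝ) < t := by linarith
  have hαt : α t ≠ 0 := ne_of_gt (hpos t ht0)
  have hcong : ∀ r ∈ Set.Ioi t, Real.exp (-γ * ∫ u in t..r, α u)
      = Real.exp (γ * B t) * E r := by
    intro r hr
    simp only [E1 t ht r hr, hEdef, ← Real.exp_add]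
    congr 1
    ring
  have hΛt : Λγ t = Real.exp (γ * B t) * f t := by
    rw [hΛ t, MeasureTheory.setIntegral_congr_fun measurableSet_Ioi hcong,
      MeasureTheory.integral_const_mul]
  rw [hΛt]
  show f t / g t = _
  simp only [hgdef, hEdef]
  rw [show -γ * B t = -(γ * B t) by ring, Real.exp_neg]
  field_simp
end

section
/- Let α(t) = c₀(1+t)^β with c₀ > 0 and β > −1, and Λ(t) = ∫_t^∞ exp(−∫_t^r α(u) du) dr. Then there exist constants 0 < c₁ ≤ c₂ such that for all t ≥ 0, c₁ ∫_0^t α(s)^{-1} ds ≤ ∫_0^t α(s) Λ(s)^2 ds ≤ c₂ ∫_0^t α(s)^{-1} ds. -/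
open MeasureTheory Filter Set Real Topology

/-!
Let `A(t) = c₀ (1 + t) ^ (β + 1) / (β + 1)`, a primitive of `α`, so that
`Λ(t) = ∫_t^∞ e^{-(A(r) - A(t))} dr`. Since `α Λ² = (α Λ)² / α`, it suffices to show that
`α Λ` is bounded above and below by positive constants on `[0, ∞)`.

For the lower bound, on `[t, t + (1 + t) ^ (-β)]` the exponent `A(r) - A(t)` stays bounded, and
this interval has length `c₀ / α(t)`.
For the upper bound, the ratio `α(t) / α(r)` grows at most polynomially in `(1 + r) / (1 + t)`,
so `α(t) e^{-(A(r) - A(t))/2} ≤ D α(r)`; hence `e^{-(A(r) - A(t))}` is at most `D / α(t)` times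
the derivative of `-2 e^{-(A(r) - A(t))/2}`, whose integral over `(t, ∞)` is `2`.
-/

section ExpNegSub

variable {A a : ℝ → ℝ} {t : ℝ}

theorem integrableOn_exp_neg_sub_and_integral_le {D : ℝ}
    (hA : ∀ r ∈ Ici t, HasDerivAt A (a r) r) (hAtop : Tendsto A atTop atTop) (hat : 0 < a t)
    (hdom : ∀ r ∈ Ioi t, a t * exp (-(A r - A t) / 2) ≤ D * a r) :
    IntegrableOn (fun r => exp (-(A r - A t))) (Ioi t) ∧
      ∫ r in Ioi t, exp (-(A r - A t)) ≤ 2 * D / a t := by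
  set F : ℝ → ℝ := fun r => -(2 * D / a t) * exp (-(A r - A t) / 2)
  set f : ℝ → ℝ := fun r => D / a t * a r * exp (-(A r - A t) / 2)
  have hF : ∀ r ∈ Ici t, HasDerivAt F (f r) r := fun r hr => by
    refine ((((hA r hr).sub_const (A t)).neg.div_const 2).exp.const_mul _).congr_deriv ?_
    simp only [f, Pi.neg_apply]
    ring
  have hle : ∀ r ∈ Ioi t, exp (-(A r - A t)) ≤ f r := fun r hr => by
    have h := mul_le_mul_of_nonneg_right (hdom r hr) (exp_pos (-(A r - A t) / 2)).le
    rw [mul_assoc, ← exp_add, add_halves, ← le_div_iff₀' hat] at h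
    exact h.trans_eq (by simp only [f]; ring)
  have hf : ∀ r ∈ Ioi t, 0 ≤ f r := fun r hr => (exp_pos _).le.trans (hle r hr)
  have hFlim : Tendsto F atTop (𝓝 0) := by
    have : Tendsto (fun r => -(A r - A t) / 2) atTop atBot :=
      (tendsto_neg_atTop_atBot.comp (tendsto_atTop_add_const_right _ _ hAtop)).atBot_div_const
        two_pos
    have hlim := (tendsto_exp_atBot.comp this).const_mul (-(2 * D / a t))
    rwa [mul_zero] at hlim
  have hfint : IntegrableOn f (Ioi t) := integrableOn_Ioi_deriv_of_nonneg' hF hf hFlim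
  have hcont : ContinuousOn (fun r => exp (-(A r - A t))) (Ici t) :=
    fun r hr => ((hA r hr).continuousAt.sub continuousAt_const).neg.rexp.continuousWithinAt
  have hint : IntegrableOn (fun r => exp (-(A r - A t))) (Ioi t) := by
    refine hfint.mono' ((hcont.mono Ioi_subset_Ici_self).aestronglyMeasurable measurableSet_Ioi) ?_
    refine (ae_restrict_iff' measurableSet_Ioi).2 (ae_of_all _ fun r hr => ?_)
    rw [norm_of_nonneg (exp_pos _).le]
    exact hle r hr
  refine ⟨hint, ?_⟩
  calc ∫ r in Ioi t, exp (-(A r - A t)) ≤ ∫ r in Ioi t, f r :=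
        setIntegral_mono_on hint hfint measurableSet_Ioi hle
    _ = 0 - F t := integral_Ioi_of_hasDerivAt_of_nonneg' hF hf hFlim
    _ = 2 * D / a t := by simp [F]

theorem mul_exp_neg_le_setIntegral_exp_neg_sub {h L : ℝ} (hh : 0 ≤ h)
    (hL : ∀ r ∈ Ioc t (t + h), A r - A t ≤ L)
    (hint : IntegrableOn (fun r => exp (-(A r - A t))) (Ioi t)) :
    h * exp (-L) ≤ ∫ r in Ioi t, exp (-(A r - A t)) :=
  calc h * exp (-L) = exp (-L) * volume.real (Ioc t (t + h)) := by
        rw [Real.volume_real_Ioc_of_le (by linarith), add_sub_cancel_left, mul_comm]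
    _ ≤ ∫ r in Ioc t (t + h), exp (-(A r - A t)) :=
        setIntegral_ge_of_const_le_real measurableSet_Ioc measure_Ioc_lt_top.ne
          (fun r hr => exp_le_exp.2 (neg_le_neg (hL r hr))) (hint.mono_set Ioc_subset_Ioi_self)
    _ ≤ ∫ r in Ioi t, exp (-(A r - A t)) :=
        setIntegral_mono_set hint (ae_of_all _ fun r => (exp_pos _).le)
          Ioc_subset_Ioi_self.eventuallyLE

theorem continuousOn_setIntegral_exp_neg_sub (hA : Continuous A)
    (hint : IntegrableOn (fun r => exp (-(A r - A t))) (Ioi t)) :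
    ContinuousOn (fun s => ∫ r in Ioi s, exp (-(A r - A s))) (Ici t) := by
  have hsplit : ∀ s, ∫ r in Ioi s, exp (-(A r - A s)) = exp (A s) * ∫ r in Ioi s, exp (-A r) :=
    fun s => by
      rw [← integral_const_mul]
      congr 1 with r
      rw [← exp_add]; ring_nf
  have hint' : IntegrableOn (fun r => exp (-A r)) (Ioi t) :=
    IntegrableOn.congr_fun (hint.const_mul (exp (-A t))) (fun r _ => by
      simp only [← exp_add]; ring_nf) measurableSet_Ioi
  simp only [hsplit]
  exact hA.rexp.continuousOn.mul hint'.continuousOn_Ici_primitive_Ioi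

end ExpNegSub

theorem rpow_le_max_mul_rpow {β x y : ℝ} (hx : 0 < x) (hxy : x ≤ y) (hy : y ≤ 2 * x) :
    y ^ β ≤ max 1 (2 ^ β) * x ^ β := by
  rcases le_total 0 β with hβ | hβ
  · calc y ^ β ≤ (2 * x) ^ β := rpow_le_rpow (hx.le.trans hxy) hy hβ
      _ = 2 ^ β * x ^ β := mul_rpow zero_le_two hx.le
      _ ≤ max 1 (2 ^ β) * x ^ β := by gcongr; exact le_max_right _ _
  · calc y ^ β ≤ x ^ β := rpow_le_rpow_of_nonpos hx hxy hβ
      _ ≤ max 1 (2 ^ β) * x ^ β := le_mul_of_one_le_left (by positivity) (le_max_left _ _)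

theorem rpow_le_mul_exp {k q z : ℝ} (hk : 0 < k) (hq : 0 < q) (hz : 0 < z) :
    z ^ q ≤ (q / k) ^ q * exp (k * z - q) := by
  have hlog : log (k * z / q) ≤ k * z / q - 1 := log_le_sub_one_of_pos (by positivity)
  rw [log_div (by positivity) hq.ne', log_mul hk.ne' hz.ne'] at hlog
  rw [rpow_def_of_pos hz, rpow_def_of_pos (div_pos hq hk), ← exp_add, exp_le_exp,
    log_div hq.ne' hk.ne']
  have := mul_le_mul_of_nonneg_left hlog hq.le
  field_simp at this
  nlinarith

theorem exists_rpow_le_mul_rpow_mul_exp {β k : ℝ} (hk : 0 < k) (hβ : -1 < β) :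
    ∃ D, ∀ x y : ℝ, 1 ≤ x → x ≤ y →
      x ^ β ≤ D * y ^ β * exp (k * (y ^ (β + 1) - x ^ (β + 1))) := by
  have hp : 0 < β + 1 := by linarith
  rcases le_or_gt 0 β with hβ0 | hβ0
  · refine ⟨1, fun x y hx hxy => ?_⟩
    have hexp : 1 ≤ exp (k * (y ^ (β + 1) - x ^ (β + 1))) :=
      one_le_exp (mul_nonneg hk.le (sub_nonneg.2 (rpow_le_rpow (by linarith) hxy hp.le)))
    calc x ^ β ≤ y ^ β := rpow_le_rpow (by linarith) hxy hβ0
      _ ≤ 1 * y ^ β * exp (k * (y ^ (β + 1) - x ^ (β + 1))) := by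
        rw [one_mul]; exact le_mul_of_one_le_right (rpow_nonneg (by linarith) _) hexp
  -- For `β < 0`, `(x / y) ^ β = z ^ q` with `z = (y / x) ^ (β + 1) ≥ 1` and `q > 0`,
  -- and the power `z ^ q` is dominated by `exp (k * z)`.
  set q := -β / (β + 1) with hq_def
  have hq : 0 < q := div_pos (by linarith) hp
  have hpq : (β + 1) * q = -β := by rw [hq_def]; field_simp
  refine ⟨(q / k) ^ q * exp (k - q), fun x y hx hxy => ?_⟩
  have hx0 : 0 < x := by linarith
  have hy0 : 0 < y := by linarith
  set z := (y / x) ^ (β + 1) with hz_def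
  have hxz : x ^ β = y ^ β * z ^ q := by
    rw [← rpow_mul (by positivity), hpq,
      div_rpow hy0.le hx0.le, rpow_neg hx0.le, rpow_neg hy0.le]
    field_simp
  have hz : z - 1 ≤ y ^ (β + 1) - x ^ (β + 1) := by
    rw [hz_def, div_rpow hy0.le hx0.le, div_sub_one (by positivity)]
    exact div_le_self (sub_nonneg.2 (rpow_le_rpow hx0.le hxy hp.le)) (one_le_rpow hx hp.le)
  calc x ^ β = y ^ β * z ^ q := hxz
    _ ≤ y ^ β * ((q / k) ^ q * exp (k * z - q)) := by
        gcongr; exact rpow_le_mul_exp hk hq (by positivity)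
    _ = (q / k) ^ q * exp (k - q) * y ^ β * exp (k * (z - 1)) := by
        rw [show k * z - q = (k - q) + k * (z - 1) by ring, exp_add]
        ring
    _ ≤ (q / k) ^ q * exp (k - q) * y ^ β * exp (k * (y ^ (β + 1) - x ^ (β + 1))) := by
        gcongr

theorem integral_mul_sq_bounds {a l : ℝ → ℝ} {b t m M : ℝ} (hbt : b ≤ t)
    (ha : ContinuousOn a (Icc b t)) (hl : ContinuousOn l (Icc b t))
    (ha0 : ∀ s ∈ Icc b t, 0 < a s) (hm : 0 ≤ m)
    (hbd : ∀ s ∈ Icc b t, m ≤ a s * l s ∧ a s * l s ≤ M) :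
    m ^ 2 * ∫ s in b..t, (a s)⁻¹ ≤ ∫ s in b..t, a s * l s ^ 2 ∧
      ∫ s in b..t, a s * l s ^ 2 ≤ M ^ 2 * ∫ s in b..t, (a s)⁻¹ := by
  have hsq : ∀ s ∈ Icc b t, a s * l s ^ 2 = (a s * l s) ^ 2 * (a s)⁻¹ := fun s hs => by
    field_simp [(ha0 s hs).ne']
  have hinv : IntervalIntegrable (fun s => (a s)⁻¹) volume b t :=
    (ha.inv₀ fun s hs => (ha0 s hs).ne').intervalIntegrable_of_Icc hbt
  have hint : IntervalIntegrable (fun s => a s * l s ^ 2) volume b t :=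
    (ha.mul (hl.pow 2)).intervalIntegrable_of_Icc hbt
  rw [← intervalIntegral.integral_const_mul, ← intervalIntegral.integral_const_mul]
  constructor
  · refine intervalIntegral.integral_mono_on hbt (hinv.const_mul _) hint fun s hs => ?_
    rw [hsq s hs]
    have := (ha0 s hs).le
    gcongr
    exact (hbd s hs).1
  · refine intervalIntegral.integral_mono_on hbt hint (hinv.const_mul _) fun s hs => ?_
    rw [hsq s hs]
    have := (ha0 s hs).le
    gcongr
    · exact hm.trans (hbd s hs).1
    · exact (hbd s hs).2

noncomputable def alphaPrimitive (c₀ β t : ℝ) : ℝ := c₀ / (β + 1) * (1 + t) ^ (β + 1)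

section AlphaPrimitive

variable {c₀ β : ℝ}

theorem hasDerivAt_alphaPrimitive (hβ : -1 < β) {t : ℝ} (ht : -1 < t) :
    HasDerivAt (alphaPrimitive c₀ β) (c₀ * (1 + t) ^ β) t := by
  have h := ((hasDerivAt_id' t).const_add 1).rpow_const (p := β + 1) (Or.inl (by linarith))
  refine (h.const_mul (c₀ / (β + 1))).congr_deriv ?_
  have hβ' : β + 1 ≠ 0 := by linarith
  rw [add_sub_cancel_right]
  field_simp

theorem continuous_alphaPrimitive (hβ : -1 < β) : Continuous (alphaPrimitive c₀ β) :=
  continuous_const.mul ((continuous_rpow_const (by linarith)).comp (continuous_const_add 1))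

theorem tendsto_alphaPrimitive_atTop (hc₀ : 0 < c₀) (hβ : -1 < β) :
    Tendsto (alphaPrimitive c₀ β) atTop atTop :=
  ((tendsto_rpow_atTop (by linarith)).comp (tendsto_atTop_add_const_left _ 1 tendsto_id))
    |>.const_mul_atTop (div_pos hc₀ (by linarith))

theorem integral_eq_alphaPrimitive_sub (hβ : -1 < β) (t r : ℝ) :
    ∫ u in t..r, c₀ * (1 + u) ^ β = alphaPrimitive c₀ β r - alphaPrimitive c₀ β t := by
  rw [intervalIntegral.integral_const_mul, intervalIntegral.integral_comp_add_left (· ^ β),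
    integral_rpow (Or.inl hβ), alphaPrimitive, alphaPrimitive]
  ring

theorem alphaPrimitive_sub_le (hc₀ : 0 ≤ c₀) (hβ : -1 < β) {t r : ℝ} (ht : 0 ≤ t)
    (htr : t ≤ r) (hr : r ≤ t + (1 + t) ^ (-β)) :
    alphaPrimitive c₀ β r - alphaPrimitive c₀ β t ≤ c₀ * max 1 (2 ^ β) := by
  have hx : 1 ≤ 1 + t := by linarith
  have hstep : (1 + t) ^ (-β) ≤ 1 + t :=
    (rpow_le_rpow_of_exponent_le hx (by linarith : -β ≤ 1)).trans_eq (rpow_one _)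
  have hbound : ∀ u ∈ uIoc t r, ‖c₀ * (1 + u) ^ β‖ ≤ c₀ * (max 1 (2 ^ β) * (1 + t) ^ β) := by
    intro u hu
    rw [uIoc_of_le htr] at hu
    have hu0 : 0 ≤ (1 + u) ^ β := rpow_nonneg (by linarith [hu.1]) _
    rw [norm_of_nonneg (mul_nonneg hc₀ hu0)]
    exact mul_le_mul_of_nonneg_left
      (rpow_le_max_mul_rpow (by linarith) (by linarith [hu.1]) (by linarith [hu.2])) hc₀
  calc alphaPrimitive c₀ β r - alphaPrimitive c₀ β t
      ≤ ‖∫ u in t..r, c₀ * (1 + u) ^ β‖ := by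
        rw [integral_eq_alphaPrimitive_sub hβ]; exact le_norm_self _
    _ ≤ c₀ * (max 1 (2 ^ β) * (1 + t) ^ β) * |r - t| :=
        intervalIntegral.norm_integral_le_of_norm_le_const hbound
    _ ≤ c₀ * (max 1 (2 ^ β) * (1 + t) ^ β) * (1 + t) ^ (-β) := by
        rw [abs_of_nonneg (by linarith)]; gcongr; linarith
    _ = c₀ * max 1 (2 ^ β) := by
        rw [mul_assoc, mul_assoc, ← rpow_add (by linarith), add_neg_cancel, rpow_zero, mul_one]

theorem exists_alpha_mul_exp_le (hc₀ : 0 < c₀) (hβ : -1 < β) :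
    ∃ D, ∀ t ≥ (0 : ℝ), ∀ r ∈ Ioi t,
      c₀ * (1 + t) ^ β * exp (-(alphaPrimitive c₀ β r - alphaPrimitive c₀ β t) / 2) ≤
        D * (c₀ * (1 + r) ^ β) := by
  set k := c₀ / (β + 1) / 2
  obtain ⟨D, hD⟩ := exists_rpow_le_mul_rpow_mul_exp (k := k)
    (div_pos (div_pos hc₀ (by linarith)) two_pos) hβ
  refine ⟨D, fun t ht r hr => ?_⟩
  set Δ := k * ((1 + r) ^ (β + 1) - (1 + t) ^ (β + 1))
  have hΔ : -(alphaPrimitive c₀ β r - alphaPrimitive c₀ β t) / 2 = -Δ := by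
    simp only [alphaPrimitive, Δ, k]; ring
  rw [hΔ]
  calc c₀ * (1 + t) ^ β * exp (-Δ)
      ≤ c₀ * (D * (1 + r) ^ β * exp Δ) * exp (-Δ) := by
        gcongr; exact hD _ _ (by linarith) (by linarith [hr.out])
    _ = D * (c₀ * (1 + r) ^ β) := by
        rw [mul_assoc, mul_assoc, mul_assoc, ← exp_add, add_neg_cancel, exp_zero]; ring

theorem exists_forall_integrableOn_and_mul_integral_le (hc₀ : 0 < c₀) (hβ : -1 < β) :
    ∃ M, ∀ t ≥ (0 : ℝ),
      IntegrableOn (fun r => exp (-(alphaPrimitive c₀ β r - alphaPrimitive c₀ β t))) (Ioi t) ∧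
        c₀ * (1 + t) ^ β *
          ∫ r in Ioi t, exp (-(alphaPrimitive c₀ β r - alphaPrimitive c₀ β t)) ≤ M := by
  obtain ⟨D, hD⟩ := exists_alpha_mul_exp_le hc₀ hβ
  refine ⟨2 * D, fun t ht => ?_⟩
  have hαt : 0 < c₀ * (1 + t) ^ β := mul_pos hc₀ (rpow_pos_of_pos (by linarith) _)
  obtain ⟨hint, hle⟩ := integrableOn_exp_neg_sub_and_integral_le
    (fun r hr => hasDerivAt_alphaPrimitive hβ (by linarith [hr.out]))
    (tendsto_alphaPrimitive_atTop hc₀ hβ) hαt (hD t ht)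
  exact ⟨hint, by rwa [le_div_iff₀' hαt] at hle⟩

theorem mul_exp_neg_le_mul_integral (hc₀ : 0 < c₀) (hβ : -1 < β) {t : ℝ} (ht : 0 ≤ t)
    (hint : IntegrableOn (fun r => exp (-(alphaPrimitive c₀ β r - alphaPrimitive c₀ β t)))
      (Ioi t)) :
    c₀ * exp (-(c₀ * max 1 (2 ^ β))) ≤
      c₀ * (1 + t) ^ β * ∫ r in Ioi t, exp (-(alphaPrimitive c₀ β r - alphaPrimitive c₀ β t)) := by
  have hx : 0 < 1 + t := by linarith
  have hlower := mul_exp_neg_le_setIntegral_exp_neg_sub (A := alphaPrimitive c₀ β)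
    (rpow_nonneg hx.le (-β)) (fun r hr => alphaPrimitive_sub_le hc₀.le hβ ht hr.1.le hr.2) hint
  calc c₀ * exp (-(c₀ * max 1 (2 ^ β)))
      = c₀ * (1 + t) ^ β * ((1 + t) ^ (-β) * exp (-(c₀ * max 1 (2 ^ β)))) := by
        rw [← mul_assoc, mul_assoc c₀, ← rpow_add hx, add_neg_cancel, rpow_zero, mul_one]
    _ ≤ _ := mul_le_mul_of_nonneg_left hlower (by positivity)

end AlphaPrimitive

theorem stmt_3 (c₀ β : ℝ) (hc₀ : 0 < c₀) (hβ : -1 < β)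
    (α Λ : ℝ → ℝ)
    (hα : ∀ t, α t = c₀ * (1 + t) ^ β)
    (hΛ : ∀ t, Λ t = ∫ r in Set.Ioi t, Real.exp (- ∫ u in t..r, α u)) :
    ∃ c₁ c₂ : ℝ, 0 < c₁ ∧ c₁ ≤ c₂ ∧ ∀ t ≥ (0:ℝ),
      c₁ * (∫ s in (0:ℝ)..t, (α s)⁻¹) ≤ (∫ s in (0:ℝ)..t, α s * (Λ s) ^ 2) ∧
      (∫ s in (0:ℝ)..t, α s * (Λ s) ^ 2) ≤ c₂ * (∫ s in (0:ℝ)..t, (α s)⁻¹) := by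
  obtain rfl : α = fun t => c₀ * (1 + t) ^ β := funext hα
  have hΛA : ∀ s, Λ s = ∫ r in Ioi s, exp (-(alphaPrimitive c₀ β r - alphaPrimitive c₀ β s)) :=
    fun s => by simp only [hΛ, integral_eq_alphaPrimitive_sub hβ]
  obtain ⟨M, hM⟩ := exists_forall_integrableOn_and_mul_integral_le hc₀ hβ
  set m := c₀ * exp (-(c₀ * max 1 (2 ^ β)))
  have hm : 0 < m := by positivity
  have hbd : ∀ s ∈ Ici (0 : ℝ), m ≤ c₀ * (1 + s) ^ β * Λ s ∧ c₀ * (1 + s) ^ β * Λ s ≤ M :=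
    fun s hs => by
      rw [hΛA]; exact ⟨mul_exp_neg_le_mul_integral hc₀ hβ hs (hM s hs).1, (hM s hs).2⟩
  have hαc : ContinuousOn (fun s => c₀ * (1 + s) ^ β) (Ici 0) :=
    continuousOn_const.mul (ContinuousOn.rpow_const (by fun_prop) fun s hs =>
      Or.inl (by linarith [hs.out]))
  have hΛc : ContinuousOn Λ (Ici 0) :=
    (continuousOn_setIntegral_exp_neg_sub (continuous_alphaPrimitive hβ) (hM 0 le_rfl).1).congr
      fun s _ => hΛA s
  refine ⟨m ^ 2, M ^ 2, pow_pos hm 2, pow_le_pow_left₀ hm.le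
    ((hbd 0 self_mem_Ici).1.trans (hbd 0 self_mem_Ici).2) 2, fun t ht => ?_⟩
  exact integral_mul_sq_bounds ht (hαc.mono Icc_subset_Ici_self) (hΛc.mono Icc_subset_Ici_self)
    (fun s hs => mul_pos hc₀ (rpow_pos_of_pos (by linarith [hs.1]) _)) hm.le
    fun s hs => hbd s hs.1
end

section
/- Let α : [0,∞) → (0,∞) be continuous with α(t) → ℓ ∈ (0,∞] as t → ∞, and suppose Λ_γ(t) = ∫_t^∞ e^{−γ∫_t^r α(u)du} dr is finite for all t and α(t)Λ_γ(t) → 1/γ, α(t)Λ(t) → 1 as t → ∞ (where Λ = Λ₁, γ ∈ (0,1)). Then there exist T₀, C₀ > 0 such that for all t ≥ T₀, Λ_γ(t)² ≤ C₀ ∫_0^t α(s) Λ(s)² ds. -/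
open MeasureTheory Filter

theorem stmt_4 (α Λγ Λ : ℝ → ℝ) (γ : ℝ) (hγ : γ ∈ Set.Ioo (0:ℝ) 1)
    (hcont : Continuous α) (hpos : ∀ t ≥ (0:ℝ), 0 < α t)
    (hdiv : Tendsto (fun t => ∫ u in (0:ℝ)..t, α u) atTop atTop)
    (hΛγ : ∀ t, Λγ t = ∫ r in Set.Ioi t, Real.exp (-γ * ∫ u in t..r, α u))
    (hΛ : ∀ t, Λ t = ∫ r in Set.Ioi t, Real.exp (- ∫ u in t..r, α u))
    (hfin : ∀ t ≥ (0:ℝ),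
      IntegrableOn (fun r => Real.exp (-γ * ∫ u in t..r, α u)) (Set.Ioi t))
    (hℓ : (∃ ℓ > (0:ℝ), Tendsto α atTop (nhds ℓ)) ∨ Tendsto α atTop atTop)
    (hlim1 : Tendsto (fun t => α t * Λγ t) atTop (nhds (1 / γ)))
    (hlim2 : Tendsto (fun t => α t * Λ t) atTop (nhds 1)) :
    ∃ T₀ > (0:ℝ), ∃ C₀ > (0:ℝ), ∀ t ≥ T₀,
      (Λγ t) ^ 2 ≤ C₀ * ∫ s in (0:ℝ)..t, α s * (Λ s) ^ 2 := by
  obtain ⟨hγ0, hγ1⟩ := hγ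
  set A : ℝ → ℝ := fun t => ∫ u in (0:ℝ)..t, α u with hAdef
  have hAcont : Continuous A :=
    intervalIntegral.continuous_primitive (fun a b => hcont.intervalIntegrable a b) 0
  have hsub : ∀ t r : ℝ, (∫ u in t..r, α u) = A r - A t := by
    intro t r
    rw [← intervalIntegral.integral_interval_sub_left (hcont.intervalIntegrable 0 r)
      (hcont.intervalIntegrable 0 t)]
  have hAnonneg : ∀ r ≥ (0:ℝ), 0 ≤ A r := by
    intro r hr
    exact intervalIntegral.integral_nonneg hr (fun u hu => (hpos u hu.1).le)
  -- rewrite Λγ and Λ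
  have hΛγ' : ∀ t, Λγ t = Real.exp (γ * A t) * ∫ r in Set.Ioi t, Real.exp (-γ * A r) := by
    intro t
    rw [hΛγ t, ← integral_const_mul]
    congr 1 with r
    rw [hsub, ← Real.exp_add]
    ring_nf
  have hΛ' : ∀ t, Λ t = Real.exp (A t) * ∫ r in Set.Ioi t, Real.exp (- A r) := by
    intro t
    rw [hΛ t, ← integral_const_mul]
    congr 1 with r
    rw [hsub, ← Real.exp_add]
    ring_nf
  -- integrability
  have hintγ : ∀ t ≥ (0:ℝ), IntegrableOn (fun r => Real.exp (-γ * A r)) (Set.Ioi t) := by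
    intro t ht
    have h1 := hfin t ht
    have h2 : (fun r => Real.exp (-γ * ∫ u in t..r, α u))
        = fun r => Real.exp (γ * A t) • Real.exp (-γ * A r) := by
      funext r
      rw [hsub, smul_eq_mul, ← Real.exp_add]
      ring_nf
    rw [h2] at h1
    exact (integrable_smul_iff (Real.exp_ne_zero _) _).mp h1
  have hint1 : ∀ t ≥ (0:ℝ), IntegrableOn (fun r => Real.exp (- A r)) (Set.Ioi t) := by
    intro t ht
    refine (hintγ t ht).mono' ((Real.continuous_exp.comp hAcont.neg).aestronglyMeasurable).restrict ?_
    filter_upwards [ae_restrict_mem measurableSet_Ioi] with r hr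
    rw [Real.norm_eq_abs, abs_of_pos (Real.exp_pos _)]
    apply Real.exp_le_exp.mpr
    have hAr : 0 ≤ A r := hAnonneg r (le_of_lt (lt_of_le_of_lt ht hr))
    nlinarith
  -- positivity of Λ
  have hIpos : ∀ t ≥ (0:ℝ), 0 < ∫ r in Set.Ioi t, Real.exp (- A r) := by
    intro t ht
    rw [setIntegral_pos_iff_support_of_nonneg_ae]
    · have : Function.support (fun r => Real.exp (-A r)) = Set.univ := by
        ext r; simp [Real.exp_ne_zero]
      rw [this, Set.univ_inter]
      simp [Real.volume_Ioi]
    · filter_upwards with r using (Real.exp_pos _).le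
    · exact hint1 t ht
  have hΛpos : ∀ t ≥ (0:ℝ), 0 < Λ t := by
    intro t ht
    rw [hΛ' t]
    exact mul_pos (Real.exp_pos _) (hIpos t ht)
  have hΛγnonneg : ∀ t, 0 ≤ Λγ t := by
    intro t
    rw [hΛγ t]
    exact setIntegral_nonneg measurableSet_Ioi (fun r _ => (Real.exp_pos _).le)
  -- continuity of Λ on [0,∞)
  set g : ℝ → ℝ := fun t => (∫ r in Set.Ioi (0:ℝ), Real.exp (-A r))
      - ∫ r in (0:ℝ)..t, Real.exp (-A r) with hgdef
  have hgcont : Continuous g := by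
    apply Continuous.sub continuous_const
    exact intervalIntegral.continuous_primitive
      (fun a b => (Real.continuous_exp.comp hAcont.neg).intervalIntegrable a b) 0
  have hg : ∀ t ≥ (0:ℝ), (∫ r in Set.Ioi t, Real.exp (-A r)) = g t := by
    intro t ht
    have hunion : Set.Ioc 0 t ∪ Set.Ioi t = Set.Ioi (0:ℝ) := Set.Ioc_union_Ioi_eq_Ioi ht
    have hsplit : (∫ r in Set.Ioi (0:ℝ), Real.exp (-A r))
        = (∫ r in Set.Ioc 0 t, Real.exp (-A r)) + ∫ r in Set.Ioi t, Real.exp (-A r) := by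
      rw [← hunion, setIntegral_union (Set.Ioc_disjoint_Ioi le_rfl) measurableSet_Ioi
        ((hint1 0 le_rfl).mono_set (by rw [← hunion]; exact Set.subset_union_left))
        (hint1 t ht)]
    rw [hgdef]
    simp only
    rw [intervalIntegral.integral_of_le ht, hsplit]
    ring
  have hΛcont : ContinuousOn Λ (Set.Ici 0) := by
    apply ContinuousOn.congr (f := fun t => Real.exp (A t) * g t)
    · exact ((Real.continuous_exp.comp hAcont).mul hgcont).continuousOn
    · intro t ht
      rw [hΛ' t, hg t ht]
  -- the integrand
  set F : ℝ → ℝ := fun s => α s * Λ s ^ 2 with hFdef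
  have hFcont : ContinuousOn F (Set.Ici 0) :=
    (hcont.continuousOn).mul (hΛcont.pow 2)
  have hFint : ∀ a b : ℝ, 0 ≤ a → a ≤ b → IntervalIntegrable F volume a b := by
    intro a b ha hab
    apply ContinuousOn.intervalIntegrable
    apply hFcont.mono
    rw [Set.uIcc_of_le hab]
    exact fun x hx => le_trans ha hx.1
  -- choose T₀
  obtain ⟨m, hm, hαm⟩ : ∃ m > (0:ℝ), ∀ᶠ t in atTop, m ≤ α t := by
    rcases hℓ with ⟨ℓ, hℓ0, hℓt⟩ | htop
    · exact ⟨ℓ/2, by positivity, hℓt.eventually (eventually_ge_nhds (by linarith))⟩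
    · exact ⟨1, one_pos, htop.eventually_ge_atTop 1⟩
  have hΛγb : ∀ᶠ t in atTop, α t * Λγ t ≤ 1/γ + 1 :=
    hlim1.eventually (eventually_le_nhds (by linarith))
  obtain ⟨T₁, hT₁⟩ := eventually_atTop.mp (hαm.and hΛγb)
  set T₀ : ℝ := max T₁ 1 with hT₀def
  have hT₀pos : (0:ℝ) < T₀ := lt_of_lt_of_le one_pos (le_max_right _ _)
  set M : ℝ := (1/γ + 1)/m with hMdef
  have hM : 0 < M := by positivity
  set c : ℝ := ∫ s in (0:ℝ)..T₀, F s with hcdef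
  have hc : 0 < c := by
    apply intervalIntegral.intervalIntegral_pos_of_pos_on (hFint 0 T₀ le_rfl hT₀pos.le) _ hT₀pos
    intro x hx
    exact mul_pos (hpos x hx.1.le) (pow_pos (hΛpos x hx.1.le) 2)
  refine ⟨T₀, hT₀pos, M^2 / c, by positivity, ?_⟩
  intro t ht
  have htT₁ : T₁ ≤ t := le_trans (le_max_left _ _) ht
  obtain ⟨hmt, hbt⟩ := hT₁ t htT₁
  have hΛγt : Λγ t ≤ M := by
    rw [hMdef, le_div_iff₀ hm]
    have := mul_le_mul_of_nonneg_right hmt (hΛγnonneg t)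
    linarith
  have h1 : Λγ t ^ 2 ≤ M ^ 2 := pow_le_pow_left₀ (hΛγnonneg t) hΛγt 2
  have h2 : c ≤ ∫ s in (0:ℝ)..t, F s := by
    rw [← intervalIntegral.integral_add_adjacent_intervals (hFint 0 T₀ le_rfl hT₀pos.le)
      (hFint T₀ t hT₀pos.le ht)]
    have h3 : 0 ≤ ∫ s in T₀..t, F s := by
      apply intervalIntegral.integral_nonneg ht
      intro u hu
      have hu0 : (0:ℝ) ≤ u := le_trans hT₀pos.le hu.1
      exact mul_nonneg (hpos u hu0).le (sq_nonneg _)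
    linarith
  calc Λγ t ^ 2 ≤ M ^ 2 := h1
    _ = M^2 / c * c := by field_simp
    _ ≤ M^2 / c * ∫ s in (0:ℝ)..t, F s :=
        mul_le_mul_of_nonneg_left h2 (by positivity)
end

section
/- Let α(t) = c₀(1+t)^β with c₀ > 0, β ∈ (−1,1), and Λ(s) = ∫_s^∞ e^{−∫_s^t α(u)du} dt. Then ε² ∫_0^{T/ε} Λ(s) ds ≍ ε^{1+β} as ε → 0 for each fixed T > 0; that is, there exist constants 0 < c₁ ≤ c₂ (depending on T, c₀, β) with c₁ ε^{1+β} ≤ ε² ∫_0^{T/ε} Λ(s) ds ≤ c₂ ε^{1+β} for all ε ∈ (0,1]. -/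
/-!
With `F` a primitive of `α`, `Λ s = ∫_s^∞ e^{F s - F r} dr`. On `[s, s + (1 + s)^{-β}]` the
exponent stays above `-2 c₀`, so `Λ s ≥ e^{-2 c₀} (1 + s)^{-β}`. Conversely `F r - F s` grows at
least linearly at rate `≍ α s = c₀ (1 + s)^β`: for `β ≥ 0` because `α` increases, for `β < 0` up to
`r = 2 s + 1`, beyond which `F r - F s ≳ r^{1+β}` contributes only a constant `≤ (1 + s)^{-β}`.
Hence `Λ s ≍ (1 + s)^{-β}` on `[0, ∞)`, so `∫_0^X Λ ≍ (1 + X)^{1-β} - 1`, which is `≍ ε^{β-1}`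
for `X = T / ε` and `ε ≤ 1`.
-/

open MeasureTheory Set Real

lemma intervalIntegrable_one_add_rpow {β : ℝ} (hβ : -1 < β) (a b : ℝ) :
    IntervalIntegrable (fun u : ℝ => (1 + u) ^ β) volume a b := by
  simpa using
    (intervalIntegral.intervalIntegrable_rpow' hβ (a := 1 + a) (b := 1 + b)).comp_add_left 1

lemma integral_one_add_rpow {β : ℝ} (hβ : -1 < β) (a b : ℝ) :
    ∫ u in a..b, (1 + u) ^ β = ((1 + b) ^ (β + 1) - (1 + a) ^ (β + 1)) / (β + 1) := by
  rw [intervalIntegral.integral_comp_add_left (fun x => x ^ β), integral_rpow (Or.inl hβ)]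

lemma mul_sub_le_integral {f : ℝ → ℝ} {a b m : ℝ} (hab : a ≤ b)
    (hf : IntervalIntegrable f volume a b) (h : ∀ x ∈ Icc a b, m ≤ f x) :
    m * (b - a) ≤ ∫ x in a..b, f x := by
  simpa [mul_comm] using intervalIntegral.integral_mono_on hab intervalIntegrable_const hf h

lemma integral_le_mul_sub {f : ℝ → ℝ} {a b M : ℝ} (hab : a ≤ b)
    (hf : IntervalIntegrable f volume a b) (h : ∀ x ∈ Icc a b, f x ≤ M) :
    ∫ x in a..b, f x ≤ M * (b - a) := by
  simpa [mul_comm] using intervalIntegral.integral_mono_on hab hf intervalIntegrable_const h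

lemma integrableOn_exp_neg_mul_rpow {b p : ℝ} (hb : 0 < b) (hp : 0 < p) :
    IntegrableOn (fun r : ℝ => exp (-(b * r ^ p))) (Ioi 0) := by
  simpa [neg_mul] using integrableOn_rpow_mul_exp_neg_mul_rpow (s := 0) (by norm_num) hp hb

lemma integrableOn_exp_neg_mul_sub {b : ℝ} (hb : 0 < b) (s : ℝ) :
    IntegrableOn (fun r : ℝ => exp (-(b * (r - s)))) (Ioi s) := by
  have := (integrableOn_exp_mul_Ioi (neg_lt_zero.mpr hb) s).const_mul (exp (b * s))
  refine IntegrableOn.congr_fun this (fun r _ => ?_) measurableSet_Ioi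
  rw [← exp_add]; ring_nf

lemma integral_exp_neg_mul_sub {b : ℝ} (hb : 0 < b) (s : ℝ) :
    ∫ r in Ioi s, exp (-(b * (r - s))) = b⁻¹ := by
  have h : ∀ r, exp (-(b * (r - s))) = exp (b * s) * exp (-b * r) := fun r => by
    rw [← exp_add]; ring_nf
  simp_rw [h]
  rw [integral_const_mul, integral_exp_mul_Ioi (neg_lt_zero.mpr hb), neg_div_neg_eq,
    mul_div_assoc', ← exp_add]
  simp [neg_mul]

section OneAddRpow

variable {c₀ β : ℝ}

lemma intervalIntegrable_mul_one_add_rpow (hβ : -1 < β) (a b : ℝ) :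
    IntervalIntegrable (fun u : ℝ => c₀ * (1 + u) ^ β) volume a b :=
  (intervalIntegrable_one_add_rpow hβ a b).const_mul c₀

lemma integral_mul_one_add_rpow (hβ : -1 < β) (s r : ℝ) :
    ∫ u in s..r, c₀ * (1 + u) ^ β = c₀ / (β + 1) * ((1 + r) ^ (β + 1) - (1 + s) ^ (β + 1)) := by
  rw [intervalIntegral.integral_const_mul, integral_one_add_rpow hβ]
  ring

lemma one_add_rpow_le_two_mul {s u : ℝ} (hβ1 : β ≤ 1) (hs : 0 ≤ s) (hsu : s ≤ u)
    (hu : u ≤ s + (1 + s) ^ (-β)) : (1 + u) ^ β ≤ 2 * (1 + s) ^ β := by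
  have hs' : 0 < 1 + s := by linarith
  rcases le_or_gt β 0 with hβ0 | hβ0
  · have := rpow_pos_of_pos hs' β
    linarith [rpow_le_rpow_of_nonpos hs' (by linarith : 1 + s ≤ 1 + u) hβ0]
  · have hδ : (1 + s) ^ (-β) ≤ 1 := rpow_le_one_of_one_le_of_nonpos (by linarith) (by linarith)
    calc (1 + u) ^ β ≤ (2 * (1 + s)) ^ β := rpow_le_rpow (by linarith) (by linarith) hβ0.le
      _ = 2 ^ β * (1 + s) ^ β := mul_rpow (by norm_num) hs'.le
      _ ≤ 2 * (1 + s) ^ β := by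
        gcongr
        simpa using rpow_le_rpow_of_exponent_le (by norm_num : (1 : ℝ) ≤ 2) hβ1

lemma integral_mul_one_add_rpow_le_two_mul (hc₀ : 0 ≤ c₀) (hβ : -1 < β) (hβ1 : β ≤ 1) {s r : ℝ}
    (hs : 0 ≤ s) (hsr : s ≤ r) (hr : r ≤ s + (1 + s) ^ (-β)) :
    ∫ u in s..r, c₀ * (1 + u) ^ β ≤ 2 * c₀ := by
  have hs' : 0 < 1 + s := by linarith
  calc ∫ u in s..r, c₀ * (1 + u) ^ β ≤ c₀ * (2 * (1 + s) ^ β) * (r - s) :=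
        integral_le_mul_sub hsr (intervalIntegrable_mul_one_add_rpow hβ s r) fun u hu => by
          gcongr
          exact one_add_rpow_le_two_mul hβ1 hs hu.1 (hu.2.trans hr)
    _ ≤ c₀ * (2 * (1 + s) ^ β) * (1 + s) ^ (-β) := by gcongr; linarith
    _ = 2 * c₀ := by
        rw [mul_assoc, mul_assoc, ← rpow_add hs', add_neg_cancel, rpow_zero]
        ring

lemma mul_sub_le_integral_mul_one_add_rpow_of_nonneg (hc₀ : 0 ≤ c₀) (hβ : 0 ≤ β) {s r : ℝ}
    (hs : -1 < s) (hsr : s ≤ r) : c₀ * (1 + s) ^ β * (r - s) ≤ ∫ u in s..r, c₀ * (1 + u) ^ β :=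
  mul_sub_le_integral hsr (intervalIntegrable_mul_one_add_rpow (by linarith) s r) fun u hu => by
    gcongr
    · linarith
    · exact hu.1

lemma mul_sub_le_integral_mul_one_add_rpow_of_nonpos (hc₀ : 0 ≤ c₀) (hβ : -1 < β) (hβ0 : β ≤ 0)
    {s r : ℝ} (hs : -1 < s) (hsr : s ≤ r) :
    c₀ * (1 + r) ^ β * (r - s) ≤ ∫ u in s..r, c₀ * (1 + u) ^ β :=
  mul_sub_le_integral hsr (intervalIntegrable_mul_one_add_rpow hβ s r) fun u hu =>
    mul_le_mul_of_nonneg_left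
      (rpow_le_rpow_of_nonpos (by linarith [hu.1]) (by linarith [hu.2]) hβ0) hc₀

end OneAddRpow

lemma continuous_exp_neg_mul_one_add_rpow (b : ℝ) {p : ℝ} (hp : 0 ≤ p) :
    Continuous fun r : ℝ => exp (-(b * (1 + r) ^ p)) := by
  have := continuous_rpow_const hp
  fun_prop

lemma integrableOn_exp_neg_mul_one_add_rpow {b p : ℝ} (hb : 0 < b) (hp : 0 < p) :
    IntegrableOn (fun r : ℝ => exp (-(b * (1 + r) ^ p))) (Ioi 0) := by
  refine (integrableOn_exp_neg_mul_rpow hb hp).mono'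
    (continuous_exp_neg_mul_one_add_rpow b hp.le).aestronglyMeasurable ?_
  filter_upwards [ae_restrict_mem measurableSet_Ioi] with r (hr : 0 < r)
  rw [norm_of_nonneg (exp_pos _).le, exp_le_exp, neg_le_neg_iff]
  gcongr
  linarith

/-- The function `Λ` of the statement, for `α(t) = c₀ (1 + t) ^ β`. -/
noncomputable def lam (c₀ β s : ℝ) : ℝ :=
  ∫ r in Ioi s, exp (-∫ u in s..r, c₀ * (1 + u) ^ β)

section Lam

variable {c₀ β : ℝ}

lemma exp_neg_integral_mul_one_add_rpow (hβ : -1 < β) (s r : ℝ) :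
    exp (-∫ u in s..r, c₀ * (1 + u) ^ β)
      = exp (c₀ / (β + 1) * (1 + s) ^ (β + 1)) * exp (-(c₀ / (β + 1) * (1 + r) ^ (β + 1))) := by
  rw [integral_mul_one_add_rpow hβ, ← exp_add]
  ring_nf

lemma integrableOn_exp_neg_integral_mul_one_add_rpow (hc₀ : 0 < c₀) (hβ : -1 < β) {s : ℝ}
    (hs : 0 ≤ s) :
    IntegrableOn (fun r => exp (-∫ u in s..r, c₀ * (1 + u) ^ β)) (Ioi s) := by
  simp_rw [exp_neg_integral_mul_one_add_rpow hβ s]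
  exact ((integrableOn_exp_neg_mul_one_add_rpow (div_pos hc₀ (by linarith))
    (by linarith)).mono_set (Ioi_subset_Ioi hs)).const_mul _

lemma continuousOn_lam (hc₀ : 0 < c₀) (hβ : -1 < β) : ContinuousOn (lam c₀ β) (Ici 0) := by
  set b := c₀ / (β + 1)
  set h := fun r : ℝ => exp (-(b * (1 + r) ^ (β + 1)))
  have hcont : Continuous h := continuous_exp_neg_mul_one_add_rpow b (by linarith)
  have hint : IntegrableOn h (Ioi 0) :=
    integrableOn_exp_neg_mul_one_add_rpow (div_pos hc₀ (by linarith))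
      (by linarith)
  -- On `[0, ∞)`, `Λ s = e^{F s} (∫_0^∞ e^{-F} - ∫_0^s e^{-F})` with `F` a primitive of `α`.
  have hlam : ∀ s ∈ Ici (0 : ℝ),
      exp (b * (1 + s) ^ (β + 1)) * ((∫ r in Ioi 0, h r) - ∫ r in 0..s, h r) = lam c₀ β s := by
    intro s hs
    rw [← intervalIntegral.integral_Ioi_sub_Ioi hint hs, sub_sub_cancel, lam]
    simp_rw [exp_neg_integral_mul_one_add_rpow hβ s]
    rw [integral_const_mul]
  refine ContinuousOn.congr (Continuous.continuousOn ?_) fun s hs => (hlam s hs).symm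
  have := continuous_rpow_const (q := β + 1) (by linarith)
  exact (by fun_prop : Continuous fun s : ℝ => exp (b * (1 + s) ^ (β + 1))).mul
    (continuous_const.sub (intervalIntegral.continuous_primitive
      (fun a b => hcont.intervalIntegrable a b) 0))

lemma exp_neg_two_mul_rpow_le_lam (hc₀ : 0 < c₀) (hβ : -1 < β) (hβ1 : β ≤ 1) {s : ℝ}
    (hs : 0 ≤ s) : exp (-(2 * c₀)) * (1 + s) ^ (-β) ≤ lam c₀ β s := by
  set δ := (1 + s) ^ (-β)
  have hδ : 0 < δ := rpow_pos_of_pos (by linarith) _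
  have hint := integrableOn_exp_neg_integral_mul_one_add_rpow hc₀ hβ hs
  calc exp (-(2 * c₀)) * δ = exp (-(2 * c₀)) * volume.real (Ioc s (s + δ)) := by
        rw [Real.volume_real_Ioc_of_le (by linarith), add_sub_cancel_left]
    _ ≤ ∫ r in Ioc s (s + δ), exp (-∫ u in s..r, c₀ * (1 + u) ^ β) :=
        setIntegral_ge_of_const_le_real measurableSet_Ioc measure_Ioc_lt_top.ne
          (fun r hr => exp_le_exp.2 <| neg_le_neg <|
            integral_mul_one_add_rpow_le_two_mul hc₀.le hβ hβ1 hs hr.1.le hr.2)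
          (hint.mono_set Ioc_subset_Ioi_self)
    _ ≤ lam c₀ β s :=
        setIntegral_mono_set hint (ae_of_all _ fun _ => (exp_pos _).le)
          Ioc_subset_Ioi_self.eventuallyLE

lemma lam_le_of_nonneg (hc₀ : 0 < c₀) (hβ : 0 ≤ β) {s : ℝ} (hs : 0 ≤ s) :
    lam c₀ β s ≤ c₀⁻¹ * (1 + s) ^ (-β) := by
  have hs' : 0 < 1 + s := by linarith
  have hb : 0 < c₀ * (1 + s) ^ β := by positivity
  calc lam c₀ β s ≤ ∫ r in Ioi s, exp (-(c₀ * (1 + s) ^ β * (r - s))) :=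
        setIntegral_mono_on (integrableOn_exp_neg_integral_mul_one_add_rpow hc₀ (by linarith) hs)
          (integrableOn_exp_neg_mul_sub hb s) measurableSet_Ioi fun r hr =>
          exp_le_exp.2 <| neg_le_neg <|
            mul_sub_le_integral_mul_one_add_rpow_of_nonneg hc₀.le hβ (by linarith) (le_of_lt hr)
    _ = c₀⁻¹ * (1 + s) ^ (-β) := by
        rw [integral_exp_neg_mul_sub hb, mul_inv, rpow_neg hs'.le]

/-- The first term bounds the integrand for `r ≤ 2 s + 1`, the second for `r ≥ 2 s + 1`. -/
lemma exp_neg_integral_mul_one_add_rpow_le_of_neg (hc₀ : 0 ≤ c₀) (hβ : -1 < β) (hβ0 : β < 0)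
    {s r : ℝ} (hs : 0 ≤ s) (hsr : s ≤ r) :
    exp (-∫ u in s..r, c₀ * (1 + u) ^ β)
      ≤ exp (-(c₀ * 2 ^ β * (1 + s) ^ β * (r - s))) + exp (-(c₀ / 2 * r ^ (β + 1))) := by
  have hlow := mul_sub_le_integral_mul_one_add_rpow_of_nonpos hc₀ hβ hβ0.le (by linarith) hsr
  have hr' : 0 < 1 + r := by linarith
  rcases le_total r (2 * s + 1) with hr | hr
  · have hhead : 2 ^ β * (1 + s) ^ β ≤ (1 + r) ^ β := by
      rw [← mul_rpow (by norm_num) (by linarith)]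
      exact rpow_le_rpow_of_nonpos hr' (by linarith) hβ0.le
    have : c₀ * 2 ^ β * (1 + s) ^ β * (r - s) ≤ c₀ * (1 + r) ^ β * (r - s) := by
      rw [mul_assoc c₀]
      gcongr
    exact (exp_le_exp.2 (by linarith)).trans (le_add_of_nonneg_right (exp_pos _).le)
  · have htail : r ^ (β + 1) ≤ (1 + r) ^ β * (2 * (r - s)) := by
      calc r ^ (β + 1) ≤ (1 + r) ^ (β + 1) := by gcongr <;> linarith
        _ = (1 + r) ^ β * (1 + r) := rpow_add_one hr'.ne' β
        _ ≤ (1 + r) ^ β * (2 * (r - s)) := by gcongr; linarith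
    have : c₀ / 2 * r ^ (β + 1) ≤ c₀ * (1 + r) ^ β * (r - s) := by
      have := mul_le_mul_of_nonneg_left htail hc₀
      linarith
    exact (exp_le_exp.2 (by linarith)).trans (le_add_of_nonneg_left (exp_pos _).le)

lemma exists_lam_le_of_neg (hc₀ : 0 < c₀) (hβ : -1 < β) (hβ0 : β < 0) :
    ∃ C, 0 ≤ C ∧ ∀ s, 0 ≤ s → lam c₀ β s ≤ C * (1 + s) ^ (-β) := by
  set K := ∫ r in Ioi 0, exp (-(c₀ / 2 * r ^ (β + 1)))
  have htail : IntegrableOn (fun r : ℝ => exp (-(c₀ / 2 * r ^ (β + 1)))) (Ioi 0) :=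
    integrableOn_exp_neg_mul_rpow (by positivity) (by linarith)
  have hK : 0 ≤ K := setIntegral_nonneg measurableSet_Ioi fun _ _ => (exp_pos _).le
  refine ⟨(c₀ * 2 ^ β)⁻¹ + K, by positivity, fun s hs => ?_⟩
  have hs' : 0 < 1 + s := by linarith
  set b := c₀ * 2 ^ β * (1 + s) ^ β
  have hb : 0 < b := by positivity
  have htail_s := htail.mono_set (Ioi_subset_Ioi hs)
  calc lam c₀ β s
      ≤ ∫ r in Ioi s, (exp (-(b * (r - s))) + exp (-(c₀ / 2 * r ^ (β + 1)))) :=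
        setIntegral_mono_on (integrableOn_exp_neg_integral_mul_one_add_rpow hc₀ hβ hs)
          ((integrableOn_exp_neg_mul_sub hb s).add htail_s) measurableSet_Ioi fun r hr =>
          exp_neg_integral_mul_one_add_rpow_le_of_neg hc₀.le hβ hβ0 hs (le_of_lt hr)
    _ = b⁻¹ + ∫ r in Ioi s, exp (-(c₀ / 2 * r ^ (β + 1))) := by
        rw [integral_add (integrableOn_exp_neg_mul_sub hb s) htail_s,
          integral_exp_neg_mul_sub hb]
    _ ≤ b⁻¹ + K := by
        gcongr
        exact setIntegral_mono_set htail (ae_of_all _ fun _ => (exp_pos _).le)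
          (Ioi_subset_Ioi hs).eventuallyLE
    _ ≤ ((c₀ * 2 ^ β)⁻¹ + K) * (1 + s) ^ (-β) := by
        have hb_inv : b⁻¹ = (c₀ * 2 ^ β)⁻¹ * (1 + s) ^ (-β) := by rw [mul_inv, rpow_neg hs'.le]
        rw [hb_inv, add_mul]
        gcongr
        exact le_mul_of_one_le_right hK (one_le_rpow (by linarith) (by linarith))

lemma exists_lam_le (hc₀ : 0 < c₀) (hβ : -1 < β) :
    ∃ C, 0 ≤ C ∧ ∀ s, 0 ≤ s → lam c₀ β s ≤ C * (1 + s) ^ (-β) := by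
  rcases lt_or_ge β 0 with hβ0 | hβ0
  · exact exists_lam_le_of_neg hc₀ hβ hβ0
  · exact ⟨c₀⁻¹, by positivity, fun s hs => lam_le_of_nonneg hc₀ hβ0 hs⟩

lemma exists_integral_lam_bounds (hc₀ : 0 < c₀) (hβ : -1 < β) (hβ1 : β < 1) :
    ∃ c C, 0 < c ∧ 0 ≤ C ∧ ∀ X, 0 ≤ X →
      c * ((1 + X) ^ (1 - β) - 1) ≤ ∫ s in (0 : ℝ)..X, lam c₀ β s ∧
      ∫ s in (0 : ℝ)..X, lam c₀ β s ≤ C * ((1 + X) ^ (1 - β) - 1) := by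
  obtain ⟨C, hC, hle⟩ := exists_lam_le hc₀ hβ
  have hp : 0 < 1 - β := by linarith
  refine ⟨exp (-(2 * c₀)) / (1 - β), C / (1 - β), by positivity, by positivity, fun X hX => ?_⟩
  have hweight : ∫ s in (0 : ℝ)..X, (1 + s) ^ (-β) = ((1 + X) ^ (1 - β) - 1) / (1 - β) := by
    rw [integral_one_add_rpow (by linarith), neg_add_eq_sub]
    norm_num
  have hw := intervalIntegrable_one_add_rpow (β := -β) (by linarith) 0 X
  have hlam : IntervalIntegrable (lam c₀ β) volume 0 X :=
    ((continuousOn_lam hc₀ hβ).mono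
      (by simp [uIcc_of_le hX, Icc_subset_Ici_self])).intervalIntegrable
  constructor
  · calc exp (-(2 * c₀)) / (1 - β) * ((1 + X) ^ (1 - β) - 1)
        = ∫ s in (0 : ℝ)..X, exp (-(2 * c₀)) * (1 + s) ^ (-β) := by
          rw [intervalIntegral.integral_const_mul, hweight]
          ring
      _ ≤ ∫ s in (0 : ℝ)..X, lam c₀ β s :=
          intervalIntegral.integral_mono_on hX (hw.const_mul _) hlam fun s hs =>
            exp_neg_two_mul_rpow_le_lam hc₀ hβ hβ1.le hs.1
  · calc ∫ s in (0 : ℝ)..X, lam c₀ β s ≤ ∫ s in (0 : ℝ)..X, C * (1 + s) ^ (-β) :=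
          intervalIntegral.integral_mono_on hX hlam (hw.const_mul _) fun s hs => hle s hs.1
      _ = C / (1 - β) * ((1 + X) ^ (1 - β) - 1) := by
          rw [intervalIntegral.integral_const_mul, hweight]
          ring

end Lam

section Scaling

variable {ε p : ℝ}

lemma sq_mul_div_rpow (hε : 0 < ε) {a : ℝ} (ha : 0 ≤ a) (p : ℝ) :
    ε ^ 2 * (a / ε) ^ p = a ^ p * ε ^ (2 - p) := by
  rw [div_rpow ha hε.le, rpow_sub hε, rpow_two]
  field_simp

lemma one_sub_rpow_neg_mul_rpow_le (hp : 0 < p) {T X : ℝ} (hT : 0 < T) (hTX : T ≤ X) :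
    (1 - (1 + T) ^ (-p)) * X ^ p ≤ (1 + X) ^ p - 1 := by
  have hX : 0 < 1 + X := by linarith
  have hκ : 0 ≤ 1 - (1 + T) ^ (-p) := by
    linarith [rpow_le_one_of_one_le_of_nonpos (by linarith : (1 : ℝ) ≤ 1 + T) (neg_nonpos.2 hp.le)]
  have hXT : (1 + X) ^ (-p) ≤ (1 + T) ^ (-p) :=
    rpow_le_rpow_of_nonpos (by linarith) (by linarith) (neg_nonpos.2 hp.le)
  calc (1 - (1 + T) ^ (-p)) * X ^ p ≤ (1 - (1 + X) ^ (-p)) * (1 + X) ^ p :=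
        mul_le_mul (by linarith) (rpow_le_rpow (by linarith) (by linarith) hp.le)
          (rpow_nonneg (by linarith) p) (by linarith)
    _ = (1 + X) ^ p - 1 := by
        rw [sub_mul, one_mul, ← rpow_add hX, neg_add_cancel, rpow_zero]

lemma le_sq_mul_one_add_div_rpow_sub_one (hp : 0 < p) {T : ℝ} (hT : 0 < T) (hε : 0 < ε)
    (hε1 : ε ≤ 1) :
    (1 - (1 + T) ^ (-p)) * T ^ p * ε ^ (2 - p) ≤ ε ^ 2 * ((1 + T / ε) ^ p - 1) := by
  calc (1 - (1 + T) ^ (-p)) * T ^ p * ε ^ (2 - p)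
      = ε ^ 2 * ((1 - (1 + T) ^ (-p)) * (T / ε) ^ p) := by
        rw [mul_left_comm, sq_mul_div_rpow hε hT.le, mul_assoc]
    _ ≤ ε ^ 2 * ((1 + T / ε) ^ p - 1) := by
        gcongr
        exact one_sub_rpow_neg_mul_rpow_le hp hT (le_div_self hT.le hε hε1)

lemma sq_mul_one_add_div_rpow_sub_one_le (hp : 0 ≤ p) {T : ℝ} (hT : 0 ≤ T) (hε : 0 < ε)
    (hε1 : ε ≤ 1) :
    ε ^ 2 * ((1 + T / ε) ^ p - 1) ≤ (1 + T) ^ p * ε ^ (2 - p) := by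
  calc ε ^ 2 * ((1 + T / ε) ^ p - 1) ≤ ε ^ 2 * ((1 + T) / ε) ^ p := by
        gcongr
        calc (1 + T / ε) ^ p - 1 ≤ (1 + T / ε) ^ p := sub_le_self _ zero_le_one
          _ ≤ ((1 + T) / ε) ^ p := by
            gcongr
            rw [add_div]
            gcongr
            exact one_le_one_div hε hε1
    _ = (1 + T) ^ p * ε ^ (2 - p) := sq_mul_div_rpow hε (by linarith) p

lemma exists_sq_mul_div_bounds {g : ℝ → ℝ} {c C T : ℝ} (hc : 0 < c) (hC : 0 ≤ C) (hp : 0 < p)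
    (hT : 0 < T) (hg : ∀ X, 0 ≤ X → c * ((1 + X) ^ p - 1) ≤ g X ∧ g X ≤ C * ((1 + X) ^ p - 1)) :
    ∃ c₁ c₂ : ℝ, 0 < c₁ ∧ ∀ ε ∈ Ioc (0 : ℝ) 1,
      c₁ * ε ^ (2 - p) ≤ ε ^ 2 * g (T / ε) ∧ ε ^ 2 * g (T / ε) ≤ c₂ * ε ^ (2 - p) := by
  have hκ : 0 < 1 - (1 + T) ^ (-p) := by
    linarith [rpow_lt_one_of_one_lt_of_neg (by linarith : (1 : ℝ) < 1 + T) (neg_lt_zero.2 hp)]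
  refine ⟨c * ((1 - (1 + T) ^ (-p)) * T ^ p), C * (1 + T) ^ p, by positivity, ?_⟩
  rintro ε ⟨hε, hε1⟩
  obtain ⟨hlow, hupp⟩ := hg (T / ε) (by positivity)
  constructor
  · calc c * ((1 - (1 + T) ^ (-p)) * T ^ p) * ε ^ (2 - p)
        = c * ((1 - (1 + T) ^ (-p)) * T ^ p * ε ^ (2 - p)) := by ring
      _ ≤ c * (ε ^ 2 * ((1 + T / ε) ^ p - 1)) :=
          mul_le_mul_of_nonneg_left (le_sq_mul_one_add_div_rpow_sub_one hp hT hε hε1) hc.le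
      _ = ε ^ 2 * (c * ((1 + T / ε) ^ p - 1)) := by ring
      _ ≤ ε ^ 2 * g (T / ε) := by gcongr
  · calc ε ^ 2 * g (T / ε) ≤ ε ^ 2 * (C * ((1 + T / ε) ^ p - 1)) := by gcongr
      _ = C * (ε ^ 2 * ((1 + T / ε) ^ p - 1)) := by ring
      _ ≤ C * ((1 + T) ^ p * ε ^ (2 - p)) :=
          mul_le_mul_of_nonneg_left (sq_mul_one_add_div_rpow_sub_one_le hp.le hT.le hε hε1) hC
      _ = C * (1 + T) ^ p * ε ^ (2 - p) := by ring

end Scaling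

theorem stmt_12 (c₀ β T : ℝ) (hc₀ : 0 < c₀) (hβ : β ∈ Set.Ioo (-1:ℝ) 1) (hT : 0 < T)
    (α Λ : ℝ → ℝ)
    (hα : ∀ t, α t = c₀ * (1 + t) ^ β)
    (hΛ : ∀ s, Λ s = ∫ r in Set.Ioi s, Real.exp (- ∫ u in s..r, α u)) :
    ∃ c₁ c₂ : ℝ, 0 < c₁ ∧ c₁ ≤ c₂ ∧ ∀ ε ∈ Set.Ioc (0:ℝ) 1,
      c₁ * ε ^ (1 + β) ≤ ε ^ 2 * (∫ s in (0:ℝ)..(T / ε), Λ s) ∧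
      ε ^ 2 * (∫ s in (0:ℝ)..(T / ε), Λ s) ≤ c₂ * ε ^ (1 + β) := by
  obtain ⟨hβ1, hβ2⟩ := hβ
  have hΛ_eq : Λ = lam c₀ β := funext fun s => by simp only [hΛ, hα, lam]
  obtain ⟨c, C, hc, hC, hbounds⟩ := exists_integral_lam_bounds hc₀ hβ1 hβ2
  obtain ⟨c₁, c₂, hc₁, hscale⟩ :=
    exists_sq_mul_div_bounds (g := fun X => ∫ s in (0 : ℝ)..X, lam c₀ β s) hc hC
      (by linarith) hT hbounds
  rw [show 2 - (1 - β) = 1 + β by ring, ← hΛ_eq] at hscale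
  refine ⟨c₁, c₂, hc₁, ?_, hscale⟩
  simpa using (hscale 1 ⟨one_pos, le_rfl⟩).1.trans (hscale 1 ⟨one_pos, le_rfl⟩).2
end
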